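/- Let K_1 = Σ_{k=0}^{p-1} E_{kk} where E is the extended CMV matrix of p-periodic Verblunsky coefficients (indices mod p), so K_1 = −Σ_{j=0}^{p-1} α_{j-1} conj(α_j). Then with the Ablowitz-Ladik Poisson bracket, {α_j, 2 Re K_1} = i ρ_j² (α_{j-1} + α_{j+1}) for all j. -/

import Mathlib

/-!
Bracketing with a coordinate picks out a single Wirtinger derivative:
`{α_j, g} = -i ρ_j² ∂g/∂ᾱ_j`. Writing `2 Re K₁ = K₁ + conj K₁` gives
`∂(2 Re K₁)/∂ᾱ_j = ∂K₁/∂ᾱ_j + conj (∂K₁/∂α_j)`, and since `K₁` is a sum of products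
`α_{m-1} ᾱ_m`, the Leibniz rule gives `∂K₁/∂ᾱ_j = -α_{j-1}` and `∂K₁/∂α_j = -ᾱ_{j+1}`.
-/

open scoped ComplexConjugate

variable {ι : Type*} [Fintype ι] [DecidableEq ι]

/-- The Wirtinger derivative `∂f/∂α_j = (∂f/∂u_j - i ∂f/∂v_j)/2` of a function
of finitely many complex variables `α_j = u_j + i v_j`. -/
noncomputable def wirtD (f : (ι → ℂ) → ℂ) (x : ι → ℂ) (j : ι) : ℂ :=
  (fderiv ℝ f x (Pi.single j 1) - Complex.I * fderiv ℝ f x (Pi.single j Complex.I)) / 2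

/-- The Wirtinger derivative `∂f/∂ᾱ_j = (∂f/∂u_j + i ∂f/∂v_j)/2`. -/
noncomputable def wirtDbar (f : (ι → ℂ) → ℂ) (x : ι → ℂ) (j : ι) : ℂ :=
  (fderiv ℝ f x (Pi.single j 1) + Complex.I * fderiv ℝ f x (Pi.single j Complex.I)) / 2

/-- The Ablowitz–Ladik Poisson bracket
`{f,g} = i Σ_j ρ_j² [ (∂f/∂ᾱ_j)(∂g/∂α_j) − (∂f/∂α_j)(∂g/∂ᾱ_j) ]`,
with `ρ_j² = 1 - |α_j|²`. -/
noncomputable def alPB (f g : (ι → ℂ) → ℂ) (x : ι → ℂ) : ℂ :=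
  Complex.I * ∑ j, ((1 - ‖x j‖ ^ 2 : ℝ) : ℂ) *
    (wirtDbar f x j * wirtD g x j - wirtD f x j * wirtDbar g x j)

section WirtingerCalculus

variable {κ : Type*} [DecidableEq κ]

lemma wirtD_apply (x : κ → ℂ) (j k : κ) :
    wirtD (fun y => y k) x j = if j = k then 1 else 0 := by
  rw [wirtD, (hasFDerivAt_apply (𝕜 := ℝ) k x).fderiv]
  by_cases h : j = k <;> simp [h]

lemma wirtDbar_apply (x : κ → ℂ) (j k : κ) : wirtDbar (fun y => y k) x j = 0 := by
  rw [wirtDbar, (hasFDerivAt_apply (𝕜 := ℝ) k x).fderiv]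
  by_cases h : j = k <;> simp [h]

section FiniteIndex

variable [Fintype κ] {f g : (κ → ℂ) → ℂ} {x : κ → ℂ}

lemma wirtD_conj (j : κ) :
    wirtD (fun y => conj (f y)) x j = conj (wirtDbar f x j) := by
  rw [wirtD, wirtDbar, show (fun y => conj (f y)) = Complex.conjCLE ∘ f from rfl,
    Complex.conjCLE.comp_fderiv]
  simp [map_div₀, map_ofNat, sub_eq_add_neg]

lemma wirtDbar_conj (j : κ) :
    wirtDbar (fun y => conj (f y)) x j = conj (wirtD f x j) := by
  rw [wirtD, wirtDbar, show (fun y => conj (f y)) = Complex.conjCLE ∘ f from rfl,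
    Complex.conjCLE.comp_fderiv]
  simp [map_div₀, map_ofNat]

lemma wirtD_neg (j : κ) :
    wirtD (fun y => -f y) x j = -wirtD f x j := by
  simp only [wirtD, fderiv_fun_neg, neg_apply]; ring

lemma wirtDbar_neg (j : κ) :
    wirtDbar (fun y => -f y) x j = -wirtDbar f x j := by
  simp only [wirtDbar, fderiv_fun_neg, neg_apply]; ring

lemma wirtDbar_add (hf : DifferentiableAt ℝ f x) (hg : DifferentiableAt ℝ g x) (j : κ) :
    wirtDbar (fun y => f y + g y) x j = wirtDbar f x j + wirtDbar g x j := by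
  simp only [wirtDbar, fderiv_fun_add hf hg, add_apply]; ring

lemma wirtD_sum {β : Type*} {s : Finset β} {F : β → (κ → ℂ) → ℂ}
    (hF : ∀ m ∈ s, DifferentiableAt ℝ (F m) x) (j : κ) :
    wirtD (fun y => ∑ m ∈ s, F m y) x j = ∑ m ∈ s, wirtD (F m) x j := by
  simp only [wirtD, fderiv_fun_sum hF]
  simp [Finset.mul_sum, ← Finset.sum_sub_distrib, Finset.sum_div]

lemma wirtDbar_sum {β : Type*} {s : Finset β} {F : β → (κ → ℂ) → ℂ}
    (hF : ∀ m ∈ s, DifferentiableAt ℝ (F m) x) (j : κ) :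
    wirtDbar (fun y => ∑ m ∈ s, F m y) x j = ∑ m ∈ s, wirtDbar (F m) x j := by
  simp only [wirtDbar, fderiv_fun_sum hF]
  simp [Finset.mul_sum, ← Finset.sum_add_distrib, Finset.sum_div]

lemma wirtD_mul (hf : DifferentiableAt ℝ f x) (hg : DifferentiableAt ℝ g x) (j : κ) :
    wirtD (fun y => f y * g y) x j = wirtD f x j * g x + f x * wirtD g x j := by
  simp only [wirtD, fderiv_fun_mul hf hg, add_apply, smul_apply,
    smul_eq_mul]
  ring

lemma wirtDbar_mul (hf : DifferentiableAt ℝ f x) (hg : DifferentiableAt ℝ g x) (j : κ) :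
    wirtDbar (fun y => f y * g y) x j = wirtDbar f x j * g x + f x * wirtDbar g x j := by
  simp only [wirtDbar, fderiv_fun_mul hf hg, add_apply, smul_apply,
    smul_eq_mul]
  ring

lemma wirtDbar_ofReal_two_mul_re (hf : DifferentiableAt ℝ f x) (j : κ) :
    wirtDbar (fun y => ((2 * (f y).re : ℝ) : ℂ)) x j = wirtDbar f x j + conj (wirtD f x j) := by
  simp_rw [← Complex.add_conj]
  rw [wirtDbar_add hf (by fun_prop), wirtDbar_conj]

end FiniteIndex

end WirtingerCalculus

lemma alPB_apply_left (g : (ι → ℂ) → ℂ) (x : ι → ℂ) (k : ι) :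
    alPB (fun y => y k) g x = -Complex.I * ((1 - ‖x k‖ ^ 2 : ℝ) : ℂ) * wirtDbar g x k := by
  simp [alPB, wirtD_apply, wirtDbar_apply, mul_assoc]

section ShiftPairing

variable {G : Type*} [AddGroup G] [Fintype G] [DecidableEq G]

lemma wirtD_neg_sum_mul_conj_shift (s : G) (x : G → ℂ) (j : G) :
    wirtD (fun y => -∑ m, y (m - s) * conj (y m)) x j = -conj (x (j + s)) := by
  rw [wirtD_neg, wirtD_sum (by fun_prop)]
  simp (disch := fun_prop) only [wirtD_mul, wirtD_apply, wirtD_conj, wirtDbar_apply]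
  simp [eq_sub_iff_add_eq, eq_comm (a := j + s)]

lemma wirtDbar_neg_sum_mul_conj_shift (s : G) (x : G → ℂ) (j : G) :
    wirtDbar (fun y => -∑ m, y (m - s) * conj (y m)) x j = -x (j - s) := by
  rw [wirtDbar_neg, wirtDbar_sum (by fun_prop)]
  simp (disch := fun_prop) only [wirtDbar_mul, wirtDbar_apply, wirtDbar_conj, wirtD_apply]
  simp

end ShiftPairing

theorem alPB_K1_bracket_general (p : ℕ) [NeZero p] (x : ZMod p → ℂ)
    (j : ZMod p) :
    alPB (fun y => y j)
        (fun y => ((2 * (-∑ m : ZMod p, y (m - 1) * conj (y m)).re : ℝ) : ℂ)) x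
      = Complex.I * ((1 - ‖x j‖ ^ 2 : ℝ) : ℂ) * (x (j - 1) + x (j + 1)) := by
  rw [alPB_apply_left, wirtDbar_ofReal_two_mul_re (by fun_prop),
    wirtDbar_neg_sum_mul_conj_shift, wirtD_neg_sum_mul_conj_shift, map_neg, Complex.conj_conj]
  ring

/-- With `K_1 = Σ_k E_{kk} = −Σ_j α_{j-1} conj(α_j)` (the sum
of the diagonal entries of the extended CMV matrix of `p`-periodic Verblunsky
coefficients, indices mod `p`), the Ablowitz–Ladik Poisson bracket satisfies
`{α_j, 2 Re K_1} = i ρ_j² (α_{j-1} + α_{j+1})` for all `j`. -/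
theorem alPB_K1_bracket (p : ℕ) [NeZero p] (x : ZMod p → ℂ)
    (hx : ∀ j, ‖x j‖ < 1) (j : ZMod p) :
    alPB (fun y => y j)
        (fun y => ((2 * (-∑ m : ZMod p, y (m - 1) * conj (y m)).re : ℝ) : ℂ)) x
      = Complex.I * ((1 - ‖x j‖ ^ 2 : ℝ) : ℂ) * (x (j - 1) + x (j + 1)) :=
  alPB_K1_bracket_general p x j
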